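/- Let T be an expansive left-invertible operator (T*T ≥ I) on a Hilbert space, T' its Cauchy dual, C_k = T'^{*k}T'^{k}, and p_k = T'^k C_k^{-1} T'^{*k}. Then for every k ∈ ℤ₊: p_k is an orthogonal projection, p_k p_{k+1} = p_{k+1}, 0 ≤ p_{k+1} ≤ p_k ≤ I, and 0 ≤ C_{k+1} ≤ C_k ≤ I. -/

import Mathlib

open ContinuousLinearMap

/-- The Cauchy dual `T' = T (T*T)⁻¹` of a left-invertible operator. -/
noncomputable def cauchyDual {H : Type*} [NormedAddCommGroup H] [InnerProductSpace ℂ H]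
    [CompleteSpace H] (T : H →L[ℂ] H) : H →L[ℂ] H :=
  T * Ring.inverse (adjoint T * T)

/-- `C_k = T'^{*k} T'^k`. -/
noncomputable def Cop {H : Type*} [NormedAddCommGroup H] [InnerProductSpace ℂ H]
    [CompleteSpace H] (T : H →L[ℂ] H) (k : ℕ) : H →L[ℂ] H :=
  adjoint ((cauchyDual T) ^ k) * (cauchyDual T) ^ k

/-- `p_k = T'^k C_k⁻¹ T'^{*k}`. -/
noncomputable def pop {H : Type*} [NormedAddCommGroup H] [InnerProductSpace ℂ H]
    [CompleteSpace H] (T : H →L[ℂ] H) (k : ℕ) : H →L[ℂ] H :=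
  (cauchyDual T) ^ k * Ring.inverse (Cop T k) * adjoint ((cauchyDual T) ^ k)

/-! The Cauchy dual `S = T'` satisfies `T* S = 1` and `S* S = (T*T)⁻¹ ≤ 1`. The second makes `S`
a contraction, so `C_{k+1} = S^{*k} (S* S) S^k ≤ C_k` and `C_k ≤ C_0 = 1`. The first makes `S^k`
left invertible, so `C_k = S^{*k} S^k` is invertible and `p_k` is the orthogonal projection onto
the range of `S^k`; as that range contains the range of `S^{k+1}`, `p_k p_{k+1} = p_{k+1}`, and
the order relations between the projections follow. -/

section RangeProjection

variable {R : Type*} [Ring R] [StarRing R]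

noncomputable def rangeProjection (a : R) : R := a * Ring.inverse (star a * a) * star a

variable {a : R} (ha : IsUnit (star a * a))
include ha

theorem rangeProjection_mul_self : rangeProjection a * a = a := by
  rw [rangeProjection, mul_assoc, mul_assoc, Ring.inverse_mul_cancel _ ha, mul_one]

theorem isStarProjection_rangeProjection : IsStarProjection (rangeProjection a) where
  isIdempotentElem := by
    rw [IsIdempotentElem]
    nth_rw 2 [rangeProjection]
    rw [← mul_assoc, ← mul_assoc, rangeProjection_mul_self ha, rangeProjection]
  isSelfAdjoint := by
    rw [IsSelfAdjoint, rangeProjection, star_mul, star_mul, star_star, ← Ring.inverse_star,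
      star_mul, star_star, mul_assoc]

theorem rangeProjection_mul_rangeProjection_mul (c : R) :
    rangeProjection a * rangeProjection (a * c) = rangeProjection (a * c) := by
  simp only [rangeProjection, ← mul_assoc]
  rw [← rangeProjection, rangeProjection_mul_self ha]

end RangeProjection

theorem antitone_star_pow_mul_pow {R : Type*} [Ring R] [PartialOrder R] [StarRing R]
    [StarOrderedRing R] {s : R} (hs : star s * s ≤ 1) :
    Antitone fun k : ℕ => star (s ^ k) * s ^ k := by
  refine antitone_nat_of_succ_le fun k => ?_
  calc star (s ^ (k + 1)) * s ^ (k + 1) = star (s ^ k) * (star s * s) * s ^ k := by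
        rw [pow_succ', star_mul]; noncomm_ring
    _ ≤ star (s ^ k) * 1 * s ^ k := star_left_conjugate_le_conjugate hs _
    _ = star (s ^ k) * s ^ k := by rw [mul_one]

section CStarAlgebra

variable {A : Type*} [CStarAlgebra A] [PartialOrder A] [StarOrderedRing A]

theorem isUnit_star_mul_self_of_mul_eq_one {a b : A} (h : b * a = 1) : IsUnit (star a * a) := by
  nontriviality A
  have hb : ‖b‖ ≠ 0 := by
    rintro hb
    rw [norm_eq_zero.1 hb, zero_mul] at h
    exact zero_ne_one h
  have hlower : 1 ≤ algebraMap ℝ A (‖b‖ ^ 2) * (star a * a) :=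
    calc (1 : A) = star a * (star b * b) * a := by
          rw [← mul_assoc, ← star_mul, mul_assoc, h, star_one, one_mul]
      _ ≤ star a * algebraMap ℝ A (‖b‖ ^ 2) * a :=
          star_left_conjugate_le_conjugate CStarAlgebra.star_mul_le_algebraMap_norm_sq a
      _ = algebraMap ℝ A (‖b‖ ^ 2) * (star a * a) := by
          rw [← Algebra.commutes, mul_assoc]
  have hscalar : IsUnit (algebraMap ℝ A (‖b‖ ^ 2)) := (isUnit_iff_ne_zero.2 (pow_ne_zero 2 hb)).map _
  exact (hscalar.mul_left_iff).1 (CStarAlgebra.isUnit_of_le 1 hlower)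

end CStarAlgebra

section CauchyDual

variable {H : Type*} [NormedAddCommGroup H] [InnerProductSpace ℂ H] [CompleteSpace H]
  {T : H →L[ℂ] H}

theorem adjoint_mul_cauchyDual (hT : 1 ≤ adjoint T * T) : adjoint T * cauchyDual T = 1 := by
  rw [cauchyDual, ← mul_assoc, Ring.mul_inverse_cancel _ (CStarAlgebra.isUnit_of_le 1 hT)]

theorem adjoint_cauchyDual_mul_cauchyDual (hT : 1 ≤ adjoint T * T) :
    adjoint (cauchyDual T) * cauchyDual T = Ring.inverse (adjoint T * T) := by
  have hD : IsSelfAdjoint (adjoint T * T) := IsSelfAdjoint.star_mul_self T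
  rw [← star_eq_adjoint, cauchyDual, star_mul, hD.ringInverse.star_eq, mul_assoc, star_eq_adjoint,
    ← cauchyDual, adjoint_mul_cauchyDual hT, mul_one]

theorem adjoint_cauchyDual_mul_cauchyDual_le_one (hT : 1 ≤ adjoint T * T) :
    adjoint (cauchyDual T) * cauchyDual T ≤ 1 := by
  rw [adjoint_cauchyDual_mul_cauchyDual hT]
  simpa using CStarAlgebra.ringInverse_le_ringInverse hT

theorem pop_eq_rangeProjection (k : ℕ) : pop T k = rangeProjection (cauchyDual T ^ k) := rfl

end CauchyDual

theorem stmt_19 {H : Type*} [NormedAddCommGroup H] [InnerProductSpace ℂ H] [CompleteSpace H]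
    (T : H →L[ℂ] H) (hexp : (adjoint T * T - 1).IsPositive) (k : ℕ) :
    pop T k * pop T k = pop T k ∧ adjoint (pop T k) = pop T k ∧
    pop T k * pop T (k + 1) = pop T (k + 1) ∧
    (pop T (k + 1)).IsPositive ∧ (pop T k - pop T (k + 1)).IsPositive ∧
    ((1 : H →L[ℂ] H) - pop T k).IsPositive ∧
    (Cop T (k + 1)).IsPositive ∧ (Cop T k - Cop T (k + 1)).IsPositive ∧
    ((1 : H →L[ℂ] H) - Cop T k).IsPositive := by
  have hT : 1 ≤ adjoint T * T := (le_def _ _).2 hexp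
  have hC : Antitone (Cop T) :=
    antitone_star_pow_mul_pow (adjoint_cauchyDual_mul_cauchyDual_le_one hT)
  have hC0 : Cop T 0 = 1 := by simp [Cop, ← star_eq_adjoint]
  have hunit (n : ℕ) : IsUnit (star (cauchyDual T ^ n) * cauchyDual T ^ n) :=
    isUnit_star_mul_self_of_mul_eq_one (pow_mul_pow_eq_one n (adjoint_mul_cauchyDual hT))
  have hproj (n : ℕ) : IsStarProjection (pop T n) := isStarProjection_rangeProjection (hunit n)
  have hnest : pop T k * pop T (k + 1) = pop T (k + 1) := by
    rw [pop_eq_rangeProjection, pop_eq_rangeProjection, pow_succ]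
    exact rangeProjection_mul_rangeProjection_mul (hunit k) _
  simp only [← nonneg_iff_isPositive, sub_nonneg]
  refine ⟨(hproj k).isIdempotentElem, (hproj k).isSelfAdjoint, hnest, (hproj (k + 1)).nonneg,
    (hproj (k + 1)).le_of_mul_eq_right (hproj k) hnest, (hproj k).le_one,
    star_mul_self_nonneg _, hC k.le_succ, hC0 ▸ hC k.zero_le⟩
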